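/- Let R be a subsemiring of the non-negative real numbers ℝ≥0, let N ∈ R, let k ≥ 1 be a natural number, and let E be a finite R-labelled directed graph of weight N. Then there exists a finite R-labelled directed graph E' of weight N which satisfies the Chirvasitu Property for k-paths (every two edges of E' belong to a common path of length k in E') and such that ct^k_R(E') ≥ ct^k_R(E). Consequently, the supremum of ct^k_R over all finite R-labelled directed graphs of weight N equals the supremum over those satisfying the Chirvasitu Property for k-paths. -/
import Mathlib


/-- An `R`-labelled directed graph: vertices, edges, source/target maps and a label map. -/
structure LGraph (R : Type) where
  V : Type
  E : Type
  s : E → V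
  t : E → V
  l : E → R

namespace LGraph

variable {R : Type}

/-- `p = (e₁, …, e_k)` is a path of length `k`: `t eᵢ = s eᵢ₊₁` for `1 ≤ i < k`. -/
def IsPath (G : LGraph R) {k : ℕ} (p : Fin k → G.E) : Prop :=
  ∀ (i : ℕ) (hi : i + 1 < k), G.t (p ⟨i, by omega⟩) = G.s (p ⟨i + 1, hi⟩)

/-- A loop is a (nonempty) path whose source equals its target. -/
def IsLoop (G : LGraph R) {k : ℕ} (p : Fin k → G.E) : Prop :=
  G.IsPath p ∧ ∃ hk : 0 < k, G.s (p ⟨0, hk⟩) = G.t (p ⟨k - 1, by omega⟩)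

/-- No repeated edges: edges are determined by their source and target. -/
def NoRepeats (G : LGraph R) : Prop :=
  ∀ e f : G.E, G.s e = G.s f → G.t e = G.t f → e = f

/-- The weight of a labelled graph: the sum of all labels. -/
noncomputable def wt [CommSemiring R] (G : LGraph R) : R :=
  ∑ᶠ e : G.E, G.l e

/-- The `k`-content of a labelled graph: the sum, over all paths `p` of length `k`,
of the product of the labels of the edges of `p`. -/
noncomputable def ct [CommSemiring R] (G : LGraph R) (k : ℕ) : R :=
  ∑ᶠ p : {p : Fin k → G.E // G.IsPath p}, ∏ i, G.l (p.1 i)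

/-- The Chirvasitu property for `k`-paths: every two edges belong to a common
path of length `k`. -/
def Chirvasitu (G : LGraph R) (k : ℕ) : Prop :=
  ∀ e f : G.E, ∃ p : Fin k → G.E, G.IsPath p ∧ (∃ i, p i = e) ∧ (∃ i, p i = f)

end LGraph

section Aux
open Finset

private lemma ct_le_wt_pow' (G : LGraph ℝ) (hFin : Finite G.E) (k : ℕ)
    (hnn : ∀ e, 0 ≤ G.l e) : G.ct k ≤ G.wt ^ k := by
  classical
  have : Fintype G.E := Fintype.ofFinite _
  rw [LGraph.ct, LGraph.wt, finsum_eq_sum_of_fintype, finsum_eq_sum_of_fintype,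
    Fintype.sum_pow]
  have h1 : ∑ p : {p : Fin k → G.E // G.IsPath p}, ∏ i, G.l (p.1 i)
      = ∑ p ∈ Finset.univ.filter (fun p : Fin k → G.E => G.IsPath p), ∏ i, G.l (p i) := by
    rw [← Finset.sum_subtype (Finset.univ.filter (fun p : Fin k → G.E => G.IsPath p))
      (by simp) (fun p => ∏ i, G.l (p i))]
  rw [h1]
  exact Finset.sum_le_sum_of_subset_of_nonneg (Finset.filter_subset _ _)
    (fun p _ _ => Finset.prod_nonneg fun i _ => hnn _)

/-- The one-vertex one-loop graph with label `N`. -/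
private def loopG (N : ℝ) : LGraph ℝ :=
  ⟨Unit, Unit, fun _ => (), fun _ => (), fun _ => N⟩

private lemma loopG_wt (N : ℝ) : (loopG N).wt = N := by
  simp [LGraph.wt, loopG, finsum_unique]

private lemma loopG_ct (N : ℝ) (k : ℕ) : (loopG N).ct k = N ^ k := by
  have hu : Unique {p : Fin k → (loopG N).E // (loopG N).IsPath p} :=
    { default := ⟨fun _ => (), fun i hi => rfl⟩
      uniq := fun p => Subtype.ext (funext fun i => rfl) }
  haveI := hu
  rw [LGraph.ct, finsum_unique]
  simp [loopG]

private lemma loopG_chirvasitu (N : ℝ) (k : ℕ) (hk : 1 ≤ k) :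
    (loopG N).Chirvasitu k := by
  intro e f
  haveI : Subsingleton (loopG N).E := inferInstanceAs (Subsingleton Unit)
  exact ⟨fun _ => (), fun i hi => rfl, ⟨⟨0, hk⟩, Subsingleton.elim _ _⟩,
    ⟨⟨0, hk⟩, Subsingleton.elim _ _⟩⟩

/-- The edgeless graph. -/
private def emptyG : LGraph ℝ :=
  ⟨Unit, Empty, fun e => e.elim, fun e => e.elim, fun e => e.elim⟩

private lemma emptyG_wt : emptyG.wt = 0 := by
  haveI : IsEmpty emptyG.E := inferInstanceAs (IsEmpty Empty)
  rw [LGraph.wt]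
  exact finsum_of_isEmpty _

private lemma emptyG_ct (k : ℕ) (hk : 1 ≤ k) : emptyG.ct k = 0 := by
  haveI : IsEmpty {p : Fin k → emptyG.E // emptyG.IsPath p} :=
    ⟨fun p => (p.1 ⟨0, hk⟩).elim⟩
  rw [LGraph.ct]
  exact finsum_of_isEmpty _

/-- There is a graph of weight `N` with the Chirvasitu property and content `N ^ k`. -/
private lemma exists_good (S : Subsemiring ℝ) (N : ℝ) (hN : N ∈ S) (k : ℕ) (hk : 1 ≤ k) :
    ∃ G' : LGraph ℝ, Finite G'.E ∧ (∀ e, G'.l e ∈ S) ∧ (∀ e, G'.l e ≠ 0) ∧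
      G'.NoRepeats ∧ G'.wt = N ∧ G'.Chirvasitu k ∧ G'.ct k = N ^ k := by
  by_cases hN0 : N = 0
  · subst hN0
    refine ⟨emptyG, inferInstanceAs (Finite Empty), fun e => e.elim, fun e => e.elim,
      fun e => e.elim, emptyG_wt, fun e => e.elim, ?_⟩
    rw [emptyG_ct k hk, zero_pow (by omega)]
  · exact ⟨loopG N, inferInstanceAs (Finite Unit), fun _ => hN, fun _ => hN0,
      fun e f _ _ => rfl, loopG_wt N, loopG_chirvasitu N k hk, loopG_ct N k⟩
end Aux

/-- (Lemma 3.1.) For a subsemiring `S ⊆ ℝ≥0`, `N ∈ S`, `k ≥ 1`, and any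
finite `S`-labelled directed graph `G` of weight `N`, there is a finite `S`-labelled
directed graph `G'` of weight `N` satisfying the Chirvasitu property for `k`-paths with
`ct^k(G') ≥ ct^k(G)`; consequently the supremum of `ct^k` over all finite `S`-labelled
graphs of weight `N` equals the supremum over those satisfying the Chirvasitu property. -/
theorem sup_ct_achieved_on_chirvasitu (S : Subsemiring ℝ) (hS : ∀ x ∈ S, 0 ≤ x)
    (N : ℝ) (hN : N ∈ S) (k : ℕ) (hk : 1 ≤ k)
    (G : LGraph ℝ) (hFin : Finite G.E)
    (hlab : ∀ e, G.l e ∈ S) (hne : ∀ e, G.l e ≠ 0) (hnr : G.NoRepeats)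
    (hwt : G.wt = N) :
    (∃ G' : LGraph ℝ, Finite G'.E ∧ (∀ e, G'.l e ∈ S) ∧ (∀ e, G'.l e ≠ 0) ∧
      G'.NoRepeats ∧ G'.wt = N ∧ G'.Chirvasitu k ∧ G.ct k ≤ G'.ct k) ∧
    sSup {x : ℝ | ∃ G' : LGraph ℝ, Finite G'.E ∧ (∀ e, G'.l e ∈ S) ∧
        (∀ e, G'.l e ≠ 0) ∧ G'.NoRepeats ∧ G'.wt = N ∧ G'.ct k = x} =
      sSup {x : ℝ | ∃ G' : LGraph ℝ, Finite G'.E ∧ (∀ e, G'.l e ∈ S) ∧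
        (∀ e, G'.l e ≠ 0) ∧ G'.NoRepeats ∧ G'.wt = N ∧ G'.Chirvasitu k ∧
        G'.ct k = x} := by
  have hnn : ∀ e, 0 ≤ G.l e := fun e => hS _ (hlab e)
  have key : ∀ H : LGraph ℝ, Finite H.E → (∀ e, H.l e ∈ S) → H.wt = N →
      H.ct k ≤ N ^ k := fun H h1 h2 h3 =>
    h3 ▸ ct_le_wt_pow' H h1 k (fun e => hS _ (h2 e))
  obtain ⟨G', hG'1, hG'2, hG'3, hG'4, hG'5, hG'6, hG'7⟩ := exists_good S N hN k hk
  constructor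
  · exact ⟨G', hG'1, hG'2, hG'3, hG'4, hG'5, hG'6,
      (key G hFin hlab hwt).trans_eq hG'7.symm⟩
  · set A := {x : ℝ | ∃ G' : LGraph ℝ, Finite G'.E ∧ (∀ e, G'.l e ∈ S) ∧
        (∀ e, G'.l e ≠ 0) ∧ G'.NoRepeats ∧ G'.wt = N ∧ G'.ct k = x} with hA
    set B := {x : ℝ | ∃ G' : LGraph ℝ, Finite G'.E ∧ (∀ e, G'.l e ∈ S) ∧
        (∀ e, G'.l e ≠ 0) ∧ G'.NoRepeats ∧ G'.wt = N ∧ G'.Chirvasitu k ∧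
        G'.ct k = x} with hB
    have hBA : B ⊆ A := by
      rintro x ⟨H, h1, h2, h3, h4, h5, _, h7⟩
      exact ⟨H, h1, h2, h3, h4, h5, h7⟩
    have hAub : ∀ x ∈ A, x ≤ N ^ k := by
      rintro x ⟨H, h1, h2, h3, h4, h5, h7⟩
      exact h7 ▸ key H h1 h2 h5
    have hAbdd : BddAbove A := ⟨N ^ k, hAub⟩
    have hNB : N ^ k ∈ B := ⟨G', hG'1, hG'2, hG'3, hG'4, hG'5, hG'6, hG'7⟩
    have hAne : A.Nonempty := ⟨G.ct k, G, hFin, hlab, hne, hnr, hwt, rfl⟩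
    refine le_antisymm (csSup_le hAne ?_) (csSup_le_csSup hAbdd ⟨_, hNB⟩ hBA)
    intro x hx
    exact (hAub x hx).trans (le_csSup (hAbdd.mono hBA) hNB)
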